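/- Integral identity for the fluid solution (Lemma 1, property 4). Let α be a DDE initial condition with associated fluid solution (a,b). Then for all t ≥ 2h: b(t) − a(t) = ∫_{t−h}^t 2 a(s)/b(s) ds. -/

import Mathlib

open MeasureTheory Set

noncomputable section

/-- `α = (a_h, u)` is a DDE initial condition: `a_h > 0` and `u : [0,h] → ℝ` is
integrable with `0 ≤ u(t) ≤ 2`. -/
def IsDDEInit (h ah : ℝ) (u : ℝ → ℝ) : Prop :=
  0 < ah ∧ MeasureTheory.IntegrableOn u (Set.Icc 0 h) ∧
    ∀ t ∈ Set.Icc (0:ℝ) h, 0 ≤ u t ∧ u t ≤ 2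

/-- `(a, b)` is the fluid solution associated to the DDE initial condition `(a_h, u)`:
`b(t) = a_h + t - h + ∫_{t-h}^h u(s) ds` on `[h, 2h]`, `a` solves `a′ = 1 - 2a/b` on `[h, 2h]`
with `a(h) = a_h`, and for `t > 2h` the pair satisfies the delay differential equations
`a′(t) = 1 - 2a(t)/b(t)` and `b′(t) = 1 - 2a(t-h)/b(t-h)`. -/
def IsFluidSolution (h ah : ℝ) (u : ℝ → ℝ) (a b : ℝ → ℝ) : Prop :=
  ContinuousOn a (Set.Ici h) ∧ ContinuousOn b (Set.Ici h) ∧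
  (∀ t ∈ Set.Icc h (2*h), b t = ah + t - h + ∫ s in (t-h)..h, u s) ∧
  a h = ah ∧
  (∀ t ∈ Set.Ioc h (2*h), HasDerivWithinAt a (1 - 2 * a t / b t) (Set.Icc h (2*h)) t) ∧
  (∀ t, 2*h < t → HasDerivAt a (1 - 2 * a t / b t) t ∧
    HasDerivAt b (1 - 2 * a (t - h) / b (t - h)) t)

/-! For `t ≥ 2h` the delay equation gives `b′(t) = a′(t - h)`, and `b(2h) = a_h + h = a(h) + h`,
so `b(t) = a(t - h) + h`. Since `s ↦ s - a(s)` has derivative `2a/b`, the integral equals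
`h - a(t) + a(t - h) = b(t) - a(t)`. The integrand is continuous because `b > 0`: on `[h, 2h]`
since `u ≥ 0`, and afterwards since `a > 0`, as at a first zero of `a` we would have `a′ = 1`. -/

open Filter Topology intervalIntegral

theorem pos_of_deriv_pos_at_zeros {f f' : ℝ → ℝ} {L T : ℝ} (hf : ContinuousOn f (Icc L T))
    (hL : 0 < f L) (hderiv : ∀ t ∈ Ioc L T, HasDerivWithinAt f (f' t) (Icc L t) t)
    (hzero : ∀ t ∈ Ioc L T, f t = 0 → 0 < f' t) : ∀ t ∈ Icc L T, 0 < f t := by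
  by_contra! hneg
  set S := Icc L T ∩ f ⁻¹' Iic 0
  have hS_bdd : BddBelow S := ⟨L, fun x hx => hx.1.1⟩
  have hS_closed : IsClosed S := hf.preimage_isClosed_of_isClosed isClosed_Icc isClosed_Iic
  obtain ⟨t, ht, hft⟩ := hneg
  set t₀ := sInf S
  have ht₀ : t₀ ∈ S := hS_closed.csInf_mem ⟨t, ht, hft⟩ hS_bdd
  have hpos_before : ∀ y ∈ Ico L t₀, 0 < f y := fun y hy => by
    by_contra! hfy
    exact hy.2.not_ge (csInf_le hS_bdd ⟨⟨hy.1, hy.2.le.trans ht₀.1.2⟩, hfy⟩)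
  have hLt₀ : L < t₀ :=
    ht₀.1.1.lt_of_ne fun hL₀ => (show f t₀ ≤ 0 from ht₀.2).not_gt (hL₀ ▸ hL)
  have hd : HasDerivWithinAt f (f' t₀) (Ico L t₀) t₀ :=
    (hderiv t₀ ⟨hLt₀, ht₀.1.2⟩).mono Ico_subset_Icc_self
  have hIco : ∀ᶠ y in 𝓝[<] t₀, y ∈ Ico L t₀ := Ico_mem_nhdsLT hLt₀
  -- `t₀` is the first point where `f ≤ 0`, so `f` reaches `0` there from above
  have hft₀ : f t₀ = 0 := by
    have hlim : Tendsto f (𝓝[<] t₀) (𝓝 (f t₀)) := by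
      rw [← nhdsWithin_Ico_eq_nhdsLT hLt₀]
      exact hd.continuousWithinAt
    exact le_antisymm ht₀.2 <| ge_of_tendsto hlim <| hIco.mono fun y hy => (hpos_before y hy).le
  have hslope : Tendsto (slope f t₀) (𝓝[<] t₀) (𝓝 (f' t₀)) := by
    rw [← nhdsWithin_Ico_eq_nhdsLT hLt₀]
    exact (hasDerivWithinAt_iff_tendsto_slope' fun h => h.2.false).1 hd
  have hderiv_nonpos : f' t₀ ≤ 0 := by
    refine le_of_tendsto hslope (hIco.mono fun y hy => ?_)
    rw [slope_def_field, hft₀, sub_zero]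
    exact div_nonpos_of_nonneg_of_nonpos (hpos_before y hy).le (by linarith [hy.2])
  exact (hzero t₀ ⟨hLt₀, ht₀.1.2⟩ hft₀).not_ge hderiv_nonpos

namespace IsFluidSolution

variable {h ah : ℝ} {u a b : ℝ → ℝ}

theorem hasDerivAt_a (hf : IsFluidSolution h ah u a b) {t : ℝ} (ht : t ∈ Ioi h \ {2 * h}) :
    HasDerivAt a (1 - 2 * a t / b t) t := by
  obtain ⟨-, -, -, -, hd₁, hd₂⟩ := hf
  rcases lt_or_gt_of_ne (ht.2 : t ≠ 2 * h) with h2 | h2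
  · exact (hd₁ t ⟨ht.1, h2.le⟩).hasDerivAt (Icc_mem_nhds ht.1 h2)
  · exact (hd₂ t h2).1

theorem hasDerivWithinAt_a_Icc (hf : IsFluidSolution h ah u a b) {t : ℝ} (ht : h < t) :
    HasDerivWithinAt a (1 - 2 * a t / b t) (Icc h t) t := by
  obtain ⟨-, -, -, -, hd₁, hd₂⟩ := hf
  rcases le_or_gt t (2 * h) with h2 | h2
  · exact (hd₁ t ⟨ht, h2⟩).mono (Icc_subset_Icc_right h2)
  · exact (hd₂ t h2).1.hasDerivWithinAt

theorem a_pos (hf : IsFluidSolution h ah u a b) (hah : 0 < ah) {t : ℝ} (ht : h ≤ t) :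
    0 < a t :=
  pos_of_deriv_pos_at_zeros (hf.1.mono Icc_subset_Ici_self) (hf.2.2.2.1 ▸ hah)
    (fun _ hs => hf.hasDerivWithinAt_a_Icc hs.1) (fun _ _ hs => by simp [hs]) t ⟨ht, le_rfl⟩

theorem b_eq_a_sub_add (hf : IsFluidSolution h ah u a b) (hh : 0 < h) {t : ℝ}
    (ht : 2 * h ≤ t) : b t = a (t - h) + h := by
  have ⟨hca, hcb, hb, haH, _, hd₂⟩ := hf
  have hb₂ : b (2 * h) = ah + h := by
    rw [hb _ ⟨by linarith, le_rfl⟩, two_mul, add_sub_cancel_right, integral_same]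
    ring
  have ha₁ : a (2 * h - h) = ah := by rw [two_mul, add_sub_cancel_right, haH]
  have hcont : ContinuousOn (fun s => b s - a (s - h)) (Icc (2 * h) t) :=
    (hcb.mono fun s hs => by simp only [mem_Ici]; linarith [hs.1]).sub <|
      hca.comp (continuousOn_id.sub continuousOn_const) fun s hs => by
        simp only [mem_Ici]; linarith [hs.1]
  have hderiv : ∀ s ∈ Ioo (2 * h) t \ {3 * h}, HasDerivAt (fun s => b s - a (s - h)) 0 s := by
    intro s hs
    have hs' : s - h ∈ Ioi h \ {2 * h} :=
      ⟨mem_Ioi.2 (by linarith [hs.1.1]), fun h3 => hs.2 (by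
        simp only [mem_singleton_iff] at h3 ⊢; linarith)⟩
    simpa using (hd₂ s hs.1.1).2.fun_sub ((hf.hasDerivAt_a hs').comp_sub_const s h)
  have hconst := integral_eq_of_hasDerivAt_off_countable_of_le _ (fun _ => (0 : ℝ)) ht
    (countable_singleton (3 * h)) hcont hderiv intervalIntegrable_const
  simp only [intervalIntegral.integral_zero, hb₂, ha₁] at hconst
  linarith

theorem b_pos (hf : IsFluidSolution h ah u a b) (hα : IsDDEInit h ah u) (hh : 0 < h) {t : ℝ}
    (ht : h ≤ t) : 0 < b t := by
  obtain ⟨hah, -, hu⟩ := hα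
  rcases le_or_gt t (2 * h) with h2 | h2
  · have hint : 0 ≤ ∫ s in (t - h)..h, u s :=
      integral_nonneg (by linarith) fun s hs => (hu s ⟨by linarith [hs.1], hs.2⟩).1
    rw [hf.2.2.1 t ⟨ht, h2⟩]
    linarith
  · rw [hf.b_eq_a_sub_add hh h2.le]
    linarith [hf.a_pos hah (by linarith : h ≤ t - h)]

theorem integral_two_mul_a_div_b (hf : IsFluidSolution h ah u a b) (hα : IsDDEInit h ah u)
    (hh : 0 < h) {p q : ℝ} (hp : h ≤ p) (hpq : p ≤ q) :
    ∫ s in p..q, 2 * a s / b s = (q - a q) - (p - a p) := by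
  have hsub : uIcc p q ⊆ Ici h := by
    rw [uIcc_of_le hpq]
    exact fun s hs => hp.trans hs.1
  have hcont : ContinuousOn (fun s => 2 * a s / b s) (uIcc p q) :=
    ((continuousOn_const.mul hf.1).div hf.2.1 fun s hs => (hf.b_pos hα hh hs).ne').mono hsub
  refine integral_eq_of_hasDerivAt_off_countable_of_le (fun s => s - a s) _ hpq
    (countable_singleton (2 * h)) (continuousOn_id.sub (hf.1.mono (uIcc_of_le hpq ▸ hsub)))
    (fun s hs => ?_) hcont.intervalIntegrable
  simpa using (hasDerivAt_id' s).fun_sub (hf.hasDerivAt_a ⟨hp.trans_lt hs.1.1, hs.2⟩)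

end IsFluidSolution

/-- **Lemma 1, property 4 (integral identity for the fluid solution).**
If `(a, b)` is the fluid solution associated to a DDE initial condition, then
`b(t) - a(t) = ∫_{t-h}^t 2 a(s)/b(s) ds` for all `t ≥ 2h`. -/
theorem fluid_solution_integral_identity
    (h ah : ℝ) (u : ℝ → ℝ) (hh : 0 < h) (hα : IsDDEInit h ah u)
    (a b : ℝ → ℝ) (hfluid : IsFluidSolution h ah u a b) :
    ∀ t : ℝ, 2*h ≤ t → b t - a t = ∫ s in (t-h)..t, 2 * a s / b s := by
  intro t ht
  rw [hfluid.integral_two_mul_a_div_b hα hh (by linarith) (by linarith),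
    hfluid.b_eq_a_sub_add hh ht]
  ring
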